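/- Let q ≥ 4 be a prime power. The (q-1)-uniform code C2(q), whose incidence matrix consists of the q² block-columns of a resolvable TD(q-1,q) together with q-3 additional columns of weight q-1 (the i-th additional column having ones in positions (i-1)q+j for 2 ≤ j ≤ q), is a (q-1)-uniform CBC with n = q²+q-3, N = (q-1)(q²+q-3), k = q²-q-1, m = q²-q; moreover ⌊(k-1)·C(m,c)/C(k-1,c)⌋ - n = 1. -/

import Mathlib

/-- A transversal design TD(ℓ,h): points `α`, `ℓ` groups of size `h`, blocks of size `ℓ`
meeting each group in exactly one point, every pair of points from different groups in
exactly one block. -/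
structure TD (α : Type) [DecidableEq α] [Fintype α] (ℓ h : ℕ) where
  groups : Finset (Finset α)
  blocks : Finset (Finset α)
  card_points : Fintype.card α = ℓ * h
  groups_card : groups.card = ℓ
  group_size : ∀ G ∈ groups, G.card = h
  groups_partition : ∀ x : α, ∃! G, G ∈ groups ∧ x ∈ G
  block_size : ∀ B ∈ blocks, B.card = ℓ
  block_meets_group : ∀ B ∈ blocks, ∀ G ∈ groups, (B ∩ G).card = 1
  pair_unique : ∀ x y : α, x ≠ y → (∀ G ∈ groups, ¬(x ∈ G ∧ y ∈ G)) →
    ∃! B, B ∈ blocks ∧ x ∈ B ∧ y ∈ B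

/-- A resolvable transversal design: the blocks are partitioned into `h` parallel
classes of `h` pairwise disjoint blocks, each class covering every point exactly once. -/
structure RTD (α : Type) [DecidableEq α] [Fintype α] (ℓ h : ℕ) extends TD α ℓ h where
  classes : Finset (Finset (Finset α))
  classes_card : classes.card = h
  class_sub : ∀ C ∈ classes, C ⊆ blocks
  class_card : ∀ C ∈ classes, C.card = h
  class_cover : ∀ C ∈ classes, ∀ x : α, ∃! B, B ∈ C ∧ x ∈ B
  block_class : ∀ B ∈ blocks, ∃! C, C ∈ classes ∧ B ∈ C

/-!
Any two items of `C2(q)` meet in at most one point: two blocks of a transversal design share at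
most one point, and each additional item lies inside a group. Suppose a family `R` of items covers
a set `U` of fewer than `|R|` points. If `|U| ≤ (q - 1)(q - 2) + 1`, counting the pairs of points
covered by the members of `R` gives `|R| C(q - 1, 2) ≤ C(|U|, 2) ≤ |U| C(q - 1, 2)`. Otherwise the
set of uncovered points has `t` points with `2 ≤ t ≤ 2q - 4`; each point lies on `q` blocks and two
points on at most one, so at least `tq - C(t, 2)` blocks miss `R`, which is too many.
The floor comes from `C(m, c) / C(m - 2, c) = m (m - 1) / ((m - c) (m - c - 1))`, which turns the
quotient into `q ^ 2 + q - 1 - 2 / (q - 1)`.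
-/

open Finset

theorem Nat.two_mul_choose_two (n : ℕ) : 2 * n.choose 2 = n * (n - 1) := by
  have := (Nat.even_mul_pred_self n).two_dvd
  rw [Nat.choose_two_right]
  omega

namespace Finset

variable {α ι : Type*} [DecidableEq α]

theorem eq_of_two_mem_of_pairwise_card_inter_le_one {F : Finset (Finset α)}
    (hF : (F : Set (Finset α)).Pairwise fun X Y => #(X ∩ Y) ≤ 1) {X Y : Finset α}
    (hX : X ∈ F) (hY : Y ∈ F) {x y : α} (hxy : x ≠ y) (hxX : x ∈ X) (hyX : y ∈ X)
    (hxY : x ∈ Y) (hyY : y ∈ Y) : X = Y := by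
  by_contra hne
  have : 1 < #(X ∩ Y) := one_lt_card.mpr ⟨x, mem_inter.mpr ⟨hxX, hxY⟩, y, mem_inter.mpr ⟨hyX, hyY⟩, hxy⟩
  exact (hF hX hY hne).not_gt this

theorem sum_choose_two_le_choose_two_card_biUnion {R : Finset (Finset α)}
    (hR : (R : Set (Finset α)).Pairwise fun X Y => #(X ∩ Y) ≤ 1) :
    ∑ X ∈ R, (#X).choose 2 ≤ (#(R.biUnion id)).choose 2 := by
  have hdisj : (R : Set (Finset α)).PairwiseDisjoint (powersetCard 2) := by
    intro X hX Y hY hne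
    refine disjoint_left.mpr fun S hSX hSY => (hR hX hY hne).not_gt ?_
    rw [mem_powersetCard] at hSX hSY
    calc 1 < #S := by omega
      _ ≤ #(X ∩ Y) := card_le_card (subset_inter hSX.1 hSY.1)
  calc ∑ X ∈ R, (#X).choose 2 = #(R.biUnion (powersetCard 2)) := by
        simp only [card_biUnion hdisj, card_powersetCard]
    _ ≤ #((R.biUnion id).powersetCard 2) :=
        card_le_card <| biUnion_subset.mpr fun X hX =>
          powersetCard_mono (subset_biUnion_of_mem id hX)
    _ = (#(R.biUnion id)).choose 2 := card_powersetCard _ _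

theorem sum_card_le_card_biUnion_add_choose_two [DecidableEq ι] {f : ι → Finset α}
    {T : Finset ι} (hT : (T : Set ι).Pairwise fun x y => #(f x ∩ f y) ≤ 1) :
    ∑ x ∈ T, #(f x) ≤ #(T.biUnion f) + (#T).choose 2 := by
  induction T using Finset.induction_on with
  | empty => simp
  | insert a T ha ih =>
    rw [coe_insert, Set.pairwise_insert] at hT
    have hmeet : #(f a ∩ T.biUnion f) ≤ #T := by
      rw [inter_biUnion]
      refine card_biUnion_le.trans ((sum_le_card_nsmul _ _ 1 fun y hy => ?_).trans (by simp))
      exact (hT.2 y hy (ne_of_mem_of_not_mem hy ha).symm).1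
    have hunion := card_union_add_card_inter (f a) (T.biUnion f)
    have hchoose : (#T + 1).choose 2 = (#T).choose 2 + #T := by
      simp [Nat.choose_succ_succ', add_comm]
    rw [sum_insert ha, biUnion_insert, card_insert_of_notMem ha, hchoose]
    have := ih hT.1
    omega

theorem mul_le_card_biUnion_filter_mem_add_choose_two {B : Finset (Finset α)}
    (hB : (B : Set (Finset α)).Pairwise fun X Y => #(X ∩ Y) ≤ 1) {r : ℕ} {T : Finset α}
    (hdeg : ∀ x ∈ T, #(B.filter (x ∈ ·)) = r) :
    #T * r ≤ #(T.biUnion fun x => B.filter (x ∈ ·)) + (#T).choose 2 := by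
  have hT : (T : Set α).Pairwise fun x y => #(B.filter (x ∈ ·) ∩ B.filter (y ∈ ·)) ≤ 1 := by
    intro x _ y _ hxy
    refine card_le_one.mpr fun X hX Y hY => ?_
    simp only [mem_inter, mem_filter] at hX hY
    exact eq_of_two_mem_of_pairwise_card_inter_le_one hB hX.1.1 hY.1.1 hxy hX.1.2 hX.2.2
      hY.1.2 hY.2.2
  calc #T * r = ∑ x ∈ T, #(B.filter (x ∈ ·)) := by rw [sum_congr rfl hdeg, sum_const, smul_eq_mul]
    _ ≤ _ := sum_card_le_card_biUnion_add_choose_two hT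

theorem card_le_card_biUnion_of_card_biUnion_le {R : Finset (Finset α)} {c : ℕ} (hc : 2 ≤ c)
    (hsize : ∀ X ∈ R, #X = c) (hR : (R : Set (Finset α)).Pairwise fun X Y => #(X ∩ Y) ≤ 1)
    (hU : #(R.biUnion id) ≤ c * (c - 1) + 1) : #R ≤ #(R.biUnion id) := by
  set U := R.biUnion id
  have hpairs := sum_choose_two_le_choose_two_card_biUnion hR
  rw [sum_congr rfl fun X hX => by rw [hsize X hX], sum_const, smul_eq_mul] at hpairs
  have hU' : (#U).choose 2 ≤ #U * c.choose 2 := by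
    have h₁ := Nat.two_mul_choose_two c
    have h₂ := Nat.two_mul_choose_two #U
    have : #U * (#U - 1) ≤ #U * (c * (c - 1)) := Nat.mul_le_mul_left _ (by omega)
    nlinarith
  exact Nat.le_of_mul_le_mul_right (hpairs.trans hU') (Nat.choose_pos hc)

theorem card_le_card_biUnion_of_pairwise_card_inter_le_one [Fintype α] {q : ℕ} (hq : 3 ≤ q)
    {F B R : Finset (Finset α)} (hα : Fintype.card α = q * (q - 1)) (hF : #F = q ^ 2 + q - 3)
    (hsize : ∀ X ∈ F, #X = q - 1)
    (hinter : (F : Set (Finset α)).Pairwise fun X Y => #(X ∩ Y) ≤ 1)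
    (hBF : B ⊆ F) (hdeg : ∀ x, #(B.filter (x ∈ ·)) = q) (hRF : R ⊆ F)
    (hRk : #R ≤ q ^ 2 - q - 1) : #R ≤ #(R.biUnion id) := by
  by_contra! hlt
  set U := R.biUnion id
  have hUα : #U ≤ q * (q - 1) := hα ▸ card_le_univ U
  rcases le_or_gt #U ((q - 1) * (q - 1 - 1) + 1) with hsmall | hlarge
  · exact (card_le_card_biUnion_of_card_biUnion_le (by omega) (fun X hX => hsize X (hRF hX))
      (hinter.mono (coe_subset.mpr hRF)) hsmall).not_gt hlt
  · have hcover := mul_le_card_biUnion_filter_mem_add_choose_two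
      (hinter.mono (coe_subset.mpr hBF)) (T := Uᶜ) fun x _ => hdeg x
    have hmiss : (Uᶜ.biUnion fun x => B.filter (x ∈ ·)) ⊆ F \ R := by
      intro X hX
      simp only [mem_biUnion, mem_filter, mem_compl] at hX
      obtain ⟨x, hxU, hXB, hxX⟩ := hX
      exact mem_sdiff.mpr ⟨hBF hXB, fun hXR => hxU (subset_biUnion_of_mem id hXR hxX)⟩
    have hW := (card_le_card hmiss).trans_eq (card_sdiff_of_subset hRF)
    have ht : #Uᶜ + #U = q * (q - 1) := by rw [card_compl, hα]; omega
    have hchoose := Nat.two_mul_choose_two #Uᶜ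
    have hqq : q * (q - 1) = q ^ 2 - q := by rw [Nat.mul_sub_one, sq]
    have hqq' : (q - 1) * (q - 1 - 1) + 3 * q = q ^ 2 + 2 := by
      zify [show 1 ≤ q by omega, show 1 ≤ q - 1 by omega]; ring
    have ht₂ : 2 ≤ #Uᶜ := by omega
    have ht₄ : #Uᶜ + 4 ≤ 2 * q := by omega
    have hcount : 2 * (#Uᶜ * q) ≤ 2 * (2 * q + #Uᶜ - 4) + #Uᶜ * (#Uᶜ - 1) := by omega
    zify [ht₂.trans' one_le_two, show 4 ≤ 2 * q + #Uᶜ by omega] at hcount ht₂ ht₄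
    nlinarith [mul_nonneg (sub_nonneg.mpr ht₂) (sub_nonneg.mpr ht₄)]

end Finset

namespace TD

variable {α : Type} [DecidableEq α] [Fintype α] {ℓ h : ℕ} (D : TD α ℓ h)

theorem card_inter_le_one_of_subset {B S G : Finset α} (hB : B ∈ D.blocks) (hG : G ∈ D.groups)
    (hSG : S ⊆ G) : #(B ∩ S) ≤ 1 :=
  (card_le_card (inter_subset_inter_left hSG)).trans (D.block_meets_group B hB G hG).le

theorem notMem_blocks_of_subset {S G : Finset α} (hG : G ∈ D.groups) (hSG : S ⊆ G)
    (hS : 2 ≤ #S) : S ∉ D.blocks := fun hB => by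
  have := D.card_inter_le_one_of_subset hB hG hSG
  rw [inter_self] at this
  omega

theorem pairwise_card_inter_le_one :
    (D.blocks : Set (Finset α)).Pairwise fun X Y => #(X ∩ Y) ≤ 1 := by
  intro B₁ h₁ B₂ h₂ hne
  refine card_le_one.mpr fun x hx y hy => by_contra fun hxy => hne ?_
  rw [mem_inter] at hx hy
  obtain ⟨G, ⟨hG, hxG⟩, hGx⟩ := D.groups_partition x
  by_cases hyG : y ∈ G
  · have : 1 < #(B₁ ∩ G) :=
      one_lt_card.mpr ⟨x, mem_inter.mpr ⟨hx.1, hxG⟩, y, mem_inter.mpr ⟨hy.1, hyG⟩, hxy⟩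
    exact absurd (D.block_meets_group B₁ h₁ G hG) this.ne'
  · obtain ⟨B, -, hB⟩ := D.pair_unique x y hxy fun G' hG' hxy' =>
      hyG (hGx G' ⟨hG', hxy'.1⟩ ▸ hxy'.2)
    exact (hB B₁ ⟨h₁, hx.1, hy.1⟩).trans (hB B₂ ⟨h₂, hx.2, hy.2⟩).symm

end TD

namespace RTD

variable {α : Type} [DecidableEq α] [Fintype α] {ℓ h : ℕ} (D : RTD α ℓ h)

theorem biUnion_classes : D.classes.biUnion id = D.blocks := by
  ext B
  simp only [mem_biUnion, id]
  exact ⟨fun ⟨C, hC, hBC⟩ => D.class_sub C hC hBC,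
    fun hB => (D.block_class B hB).exists.imp fun _ => id⟩

theorem pairwiseDisjoint_classes : (D.classes : Set (Finset (Finset α))).PairwiseDisjoint id := by
  intro C₁ h₁ C₂ h₂ hne
  refine disjoint_left.mpr fun B hB₁ hB₂ => hne ?_
  exact (D.block_class B (D.class_sub C₁ h₁ hB₁)).unique ⟨h₁, hB₁⟩ ⟨h₂, hB₂⟩

theorem card_blocks : #D.blocks = h * h := by
  rw [← D.biUnion_classes, card_biUnion D.pairwiseDisjoint_classes]
  dsimp only [id]
  rw [sum_congr rfl D.class_card, sum_const, D.classes_card, smul_eq_mul]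

theorem card_filter_mem_blocks (x : α) : #(D.blocks.filter (x ∈ ·)) = h := by
  have hclass : ∀ C ∈ D.classes, #(C.filter (x ∈ ·)) = 1 := fun C hC => by
    simpa only [card_eq_one_iff_existsUnique, mem_filter] using D.class_cover C hC x
  rw [← D.biUnion_classes, filter_biUnion]
  dsimp only [id]
  rw [card_biUnion (D.pairwiseDisjoint_classes.mono_on fun C _ => filter_subset _ C),
    sum_congr rfl hclass, sum_const, D.classes_card, smul_eq_mul, mul_one]

end RTD

def chunk (n q i : ℕ) : Finset (Fin n) :=
  univ.filter fun x => i * q ≤ x.val ∧ x.val < (i + 1) * q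

/-- The chunk `chunk n q (i - 1)` without its first point; `i` is `1`-based, as in the paper. -/
def chunkTail (n q i : ℕ) : Finset (Fin n) :=
  univ.filter fun x => (i - 1) * q + 1 ≤ x.val ∧ x.val ≤ i * q - 1

section chunks

variable {n q i j : ℕ}

theorem chunkTail_subset_chunk (hi : 1 ≤ i) : chunkTail n q i ⊆ chunk n q (i - 1) := by
  intro x hx
  simp only [chunkTail, chunk, mem_filter, mem_univ, true_and, Nat.sub_add_cancel hi] at hx ⊢
  have := Nat.sub_one_mul i q
  omega

theorem card_chunkTail (hi : 1 ≤ i) (hn : i * q ≤ n) : #(chunkTail n q i) = q - 1 := by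
  have hIcc : chunkTail n q i = (Icc ((i - 1) * q + 1) (i * q - 1)).attachFin
      fun m hm => by rw [mem_Icc] at hm; omega := by
    ext x
    simp [chunkTail]
  have := Nat.sub_one_mul i q
  have : q ≤ i * q := Nat.le_mul_of_pos_left q hi
  rw [hIcc, card_attachFin, Nat.card_Icc]
  omega

theorem disjoint_chunkTail (hij : i < j) : Disjoint (chunkTail n q i) (chunkTail n q j) := by
  refine disjoint_left.mpr fun x hxi hxj => ?_
  simp only [chunkTail, mem_filter] at hxi hxj
  have : i * q ≤ (j - 1) * q := Nat.mul_le_mul_right q (by omega)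
  omega

end chunks

section codeC2

variable {q : ℕ}

def codeC2 (D : TD (Fin (q * (q - 1))) (q - 1) q) : Finset (Finset (Fin (q * (q - 1)))) :=
  D.blocks ∪ (Icc 1 (q - 3)).image (chunkTail (q * (q - 1)) q)

theorem card_chunkTail_of_mem_Icc {i : ℕ} (hi : i ∈ Icc 1 (q - 3)) :
    #(chunkTail (q * (q - 1)) q i) = q - 1 := by
  rw [mem_Icc] at hi
  refine card_chunkTail hi.1 ?_
  rw [mul_comm]
  exact Nat.mul_le_mul_left q (by omega)

theorem injOn_chunkTail (hq : 3 ≤ q) : Set.InjOn (chunkTail (q * (q - 1)) q) (Icc 1 (q - 3)) := by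
  intro i hi j hj hij
  by_contra hne
  have hdisj : Disjoint (chunkTail (q * (q - 1)) q i) (chunkTail (q * (q - 1)) q j) := by
    rcases Nat.lt_or_gt_of_ne hne with h | h
    · exact disjoint_chunkTail h
    · exact (disjoint_chunkTail h).symm
  rw [hij, disjoint_self_iff_empty] at hdisj
  have := card_chunkTail_of_mem_Icc (mem_coe.mp hj)
  rw [hdisj, card_empty] at this
  omega

variable {D : TD (Fin (q * (q - 1))) (q - 1) q}

theorem exists_mem_groups_chunkTail_subset
    (hgroups : ∀ i < q - 1, chunk (q * (q - 1)) q i ∈ D.groups) {i : ℕ} (hi : i ∈ Icc 1 (q - 3)) :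
    ∃ G ∈ D.groups, chunkTail (q * (q - 1)) q i ⊆ G := by
  rw [mem_Icc] at hi
  exact ⟨_, hgroups (i - 1) (by omega), chunkTail_subset_chunk hi.1⟩

theorem disjoint_blocks_image_chunkTail (hq : 3 ≤ q)
    (hgroups : ∀ i < q - 1, chunk (q * (q - 1)) q i ∈ D.groups) :
    Disjoint D.blocks ((Icc 1 (q - 3)).image (chunkTail (q * (q - 1)) q)) := by
  refine disjoint_right.mpr fun X hX => ?_
  obtain ⟨i, hi, rfl⟩ := mem_image.mp hX
  obtain ⟨G, hG, hsub⟩ := exists_mem_groups_chunkTail_subset hgroups hi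
  exact D.notMem_blocks_of_subset hG hsub (by rw [card_chunkTail_of_mem_Icc hi]; omega)

theorem card_codeC2 {D : RTD (Fin (q * (q - 1))) (q - 1) q} (hq : 3 ≤ q)
    (hgroups : ∀ i < q - 1, chunk (q * (q - 1)) q i ∈ D.groups) :
    #(codeC2 D.toTD) = q ^ 2 + q - 3 := by
  rw [codeC2, card_union_of_disjoint (disjoint_blocks_image_chunkTail hq hgroups), D.card_blocks,
    card_image_of_injOn (injOn_chunkTail hq), Nat.card_Icc, sq]
  omega

theorem card_of_mem_codeC2 {X : Finset (Fin (q * (q - 1)))} (hX : X ∈ codeC2 D) :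
    #X = q - 1 := by
  rcases mem_union.mp hX with hX | hX
  · exact D.block_size X hX
  · obtain ⟨i, hi, rfl⟩ := mem_image.mp hX
    exact card_chunkTail_of_mem_Icc hi

theorem pairwise_card_inter_le_one_codeC2
    (hgroups : ∀ i < q - 1, chunk (q * (q - 1)) q i ∈ D.groups) :
    (codeC2 D : Set (Finset (Fin (q * (q - 1))))).Pairwise fun X Y => #(X ∩ Y) ≤ 1 := by
  have hblock : ∀ B ∈ D.blocks, ∀ i ∈ Icc 1 (q - 3), #(B ∩ chunkTail (q * (q - 1)) q i) ≤ 1 :=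
    fun B hB i hi =>
      let ⟨_, hG, hsub⟩ := exists_mem_groups_chunkTail_subset hgroups hi
      D.card_inter_le_one_of_subset hB hG hsub
  intro X hX Y hY hne
  rcases mem_union.mp hX with hX | hX <;> rcases mem_union.mp hY with hY | hY
  · exact D.pairwise_card_inter_le_one hX hY hne
  · obtain ⟨j, hj, rfl⟩ := mem_image.mp hY
    exact hblock X hX j hj
  · obtain ⟨i, hi, rfl⟩ := mem_image.mp hX
    rw [inter_comm]
    exact hblock Y hY i hi
  · obtain ⟨i, -, rfl⟩ := mem_image.mp hX
    obtain ⟨j, -, rfl⟩ := mem_image.mp hY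
    have hij : i ≠ j := fun h => hne (h ▸ rfl)
    rcases Nat.lt_or_gt_of_ne hij with h | h
    · simp [disjoint_iff_inter_eq_empty.mp (disjoint_chunkTail h)]
    · simp [disjoint_iff_inter_eq_empty.mp (disjoint_chunkTail h).symm]

end codeC2

theorem Nat.choose_add_two_mul (n k : ℕ) :
    (n + 2).choose k * ((n + 2 - k) * (n + 1 - k)) = n.choose k * ((n + 2) * (n + 1)) := by
  have h₁ : n.choose k * (n + 1) = (n + 1).choose k * (n + 1 - k) := Nat.choose_mul_succ_eq n k
  have h₂ : (n + 1).choose k * (n + 2) = (n + 2).choose k * (n + 2 - k) :=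
    Nat.choose_mul_succ_eq (n + 1) k
  calc (n + 2).choose k * ((n + 2 - k) * (n + 1 - k))
      = (n + 1).choose k * (n + 1 - k) * (n + 2) := by rw [mul_right_comm, h₂, mul_assoc]
    _ = n.choose k * ((n + 2) * (n + 1)) := by rw [← h₁]; ring

theorem floor_choose_ratio (q : ℕ) (hq : 3 ≤ q) :
    ⌊((q : ℚ) ^ 2 - q - 2) * ((q ^ 2 - q).choose (q - 1) : ℚ) /
        ((q ^ 2 - q - 2).choose (q - 1) : ℚ)⌋ = (q : ℤ) ^ 2 + q - 2 := by
  obtain ⟨p, rfl⟩ : ∃ p, q = p + 3 := ⟨q - 3, by omega⟩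
  have hm : (p + 3) ^ 2 - (p + 3) = p ^ 2 + 5 * p + 4 + 2 := by
    rw [Nat.sub_eq_iff_eq_add (by nlinarith)]
    ring
  have key := Nat.choose_add_two_mul (p ^ 2 + 5 * p + 4) (p + 2)
  rw [show p ^ 2 + 5 * p + 4 + 2 - (p + 2) = (p + 2) ^ 2 by
        rw [Nat.sub_eq_iff_eq_add (by nlinarith)]; ring,
      show p ^ 2 + 5 * p + 4 + 1 - (p + 2) = (p + 3) * (p + 1) by
        rw [Nat.sub_eq_iff_eq_add (by nlinarith)]; ring] at key
  rw [hm, Nat.add_sub_cancel, show p + 3 - 1 = p + 2 from rfl]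
  have hpos : (0 : ℚ) < (p ^ 2 + 5 * p + 4).choose (p + 2) := by
    exact_mod_cast Nat.choose_pos (by nlinarith)
  have hratio : ((p ^ 2 + 5 * p + 4 + 2).choose (p + 2) : ℚ) =
      (p ^ 2 + 5 * p + 4).choose (p + 2) * ((p ^ 2 + 5 * p + 6) * (p ^ 2 + 5 * p + 5)) /
        ((p + 2) ^ 2 * ((p + 3) * (p + 1))) := by
    rw [eq_div_iff (by positivity)]
    exact_mod_cast key
  have hval : ((((p + 3 : ℕ) : ℚ) ^ 2 - (p + 3 : ℕ) - 2) *
      ((p ^ 2 + 5 * p + 4 + 2).choose (p + 2) : ℚ) / ((p ^ 2 + 5 * p + 4).choose (p + 2) : ℚ))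
      = ((p + 3 : ℕ) : ℚ) ^ 2 + (p + 3 : ℕ) - 1 - 2 / (p + 2) := by
    rw [hratio]
    field_simp
    push_cast
    ring
  have hfrac : (0 : ℚ) < 2 / (p + 2) ∧ (2 : ℚ) / (p + 2) ≤ 1 :=
    ⟨by positivity, by rw [div_le_one (by positivity)]; linarith⟩
  rw [hval, Int.floor_eq_iff]
  push_cast
  constructor <;> linarith

theorem stmt_17_general (q : ℕ) (hq : 4 ≤ q)
    (D : RTD (Fin (q * (q - 1))) (q - 1) q)
    (hgroups : ∀ i < q - 1,
      (Finset.univ.filter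
        (fun x : Fin (q * (q - 1)) => i * q ≤ x.val ∧ x.val < (i + 1) * q)) ∈ D.groups) :
    let E : ℕ → Finset (Fin (q * (q - 1))) := fun i =>
      Finset.univ.filter (fun x => (i - 1) * q + 1 ≤ x.val ∧ x.val ≤ i * q - 1)
    let Items := D.blocks ∪ (Finset.Icc 1 (q - 3)).image E
    Items.card = q ^ 2 + q - 3 ∧
    (∀ X ∈ Items, X.card = q - 1) ∧
    (∑ X ∈ Items, X.card) = (q - 1) * (q ^ 2 + q - 3) ∧
    Fintype.card (Fin (q * (q - 1))) = q ^ 2 - q ∧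
    (∀ R ⊆ Items, R.card ≤ q ^ 2 - q - 1 → R.card ≤ (R.biUnion id).card) ∧
    ⌊((q : ℚ) ^ 2 - q - 2) * ((q ^ 2 - q).choose (q - 1) : ℚ) /
        ((q ^ 2 - q - 2).choose (q - 1) : ℚ)⌋ - (q ^ 2 + q - 3 : ℤ) = 1 := by
  intro E Items
  have hsize : ∀ X ∈ Items, #X = q - 1 := fun X hX => card_of_mem_codeC2 hX
  have hcard : #Items = q ^ 2 + q - 3 := card_codeC2 (by omega) hgroups
  refine ⟨hcard, hsize, ?_, ?_, fun R hR hRk => ?_, ?_⟩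
  · rw [sum_congr rfl hsize, sum_const, hcard, smul_eq_mul, mul_comm]
  · rw [Fintype.card_fin, Nat.mul_sub_one, sq]
  · exact card_le_card_biUnion_of_pairwise_card_inter_le_one (by omega) (Fintype.card_fin _)
      hcard hsize (pairwise_card_inter_le_one_codeC2 hgroups) subset_union_left
      D.card_filter_mem_blocks hR hRk
  · rw [floor_choose_ratio q (by omega)]
    ring

/-- For q ≥ 4 a prime power, the code C2(q), whose items are the q²
blocks of a resolvable TD(q-1,q) on the points 0,…,q(q-1)-1 (with the q-1 groups being
the consecutive chunks of q points) together with q-3 additional items, the i-th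
(1 ≤ i ≤ q-3) consisting of the points (i-1)q+j-1 for 2 ≤ j ≤ q, is a (q-1)-uniform
CBC with n = q²+q-3, N = (q-1)(q²+q-3), k = q²-q-1, m = q²-q; moreover the uniform
bound ⌊(k-1)·C(m,c)/C(k-1,c)⌋ exceeds n by exactly 1. -/
theorem stmt_17 (q : ℕ) (hq : 4 ≤ q) (hpp : IsPrimePow q)
    (D : RTD (Fin (q * (q - 1))) (q - 1) q)
    (hgroups : ∀ i < q - 1,
      (Finset.univ.filter
        (fun x : Fin (q * (q - 1)) => i * q ≤ x.val ∧ x.val < (i + 1) * q)) ∈ D.groups) :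
    let E : ℕ → Finset (Fin (q * (q - 1))) := fun i =>
      Finset.univ.filter (fun x => (i - 1) * q + 1 ≤ x.val ∧ x.val ≤ i * q - 1)
    let Items := D.blocks ∪ (Finset.Icc 1 (q - 3)).image E
    Items.card = q ^ 2 + q - 3 ∧
    (∀ X ∈ Items, X.card = q - 1) ∧
    (∑ X ∈ Items, X.card) = (q - 1) * (q ^ 2 + q - 3) ∧
    Fintype.card (Fin (q * (q - 1))) = q ^ 2 - q ∧
    (∀ R ⊆ Items, R.card ≤ q ^ 2 - q - 1 → R.card ≤ (R.biUnion id).card) ∧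
    ⌊((q : ℚ) ^ 2 - q - 2) * ((q ^ 2 - q).choose (q - 1) : ℚ) /
        ((q ^ 2 - q - 2).choose (q - 1) : ℚ)⌋ - (q ^ 2 + q - 3 : ℤ) = 1 :=
  stmt_17_general q hq D hgroups
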